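/- arXiv:0708.2282 — 2 statements merged into one kernel-verified Lean document; each statement's English description precedes it below -/
import Mathlib

section
/- There exists a nontrivial minimal blocking set of size 8 in PG(3,3). -/
/-- A blocking set in `PG(n,q)` (points: 1-dimensional subspaces of `K^(n+1)`,
hyperplanes: `n`-dimensional subspaces): a set of points meeting every hyperplane. -/
def IsBlockingSet {K : Type*} [Field K] {n : ℕ}
    (B : Set (Projectivization K (Fin (n + 1) → K))) : Prop :=
  ∀ W : Submodule K (Fin (n + 1) → K), Module.finrank K W = n →
    ∃ x ∈ B, x.rep ∈ W

/-- A minimal blocking set: a blocking set no proper subset of which is a blocking set. -/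
def IsMinimalBlockingSet {K : Type*} [Field K] {n : ℕ}
    (B : Set (Projectivization K (Fin (n + 1) → K))) : Prop :=
  IsBlockingSet B ∧ ∀ B' ⊂ B, ¬ IsBlockingSet B'

/-- The linear span of (representative vectors of) a set of projective points;
the projective dimension `d(B)` is `finrank` of this span minus one. -/
noncomputable def projSpan {K : Type*} [Field K] {n : ℕ}
    (B : Set (Projectivization K (Fin (n + 1) → K))) : Submodule K (Fin (n + 1) → K) :=
  Submodule.span K (Projectivization.rep '' B)

/-!
The eight points are listed explicitly, and three finite facts about them are checked by
computation over `𝔽₃`: every nonzero linear form vanishes at one of them (so they block every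
plane); each of them has a tangent plane containing no other of the points (so none can be
removed, and the points are distinct); and the line through any two of them has a point
outside the set (so the set contains no line). What remains is the translation between
hyperplanes of `K^(n+1)` and kernels of nonzero dot products `a ⬝ᵥ -`.
-/

open Module Projectivization
open scoped LinearAlgebra.Projectivization

section Projective

variable {K V : Type*} [Field K] [AddCommGroup V] [Module K V]

theorem Projectivization.rep_mk_mem_iff {v : V} (hv : v ≠ 0) {W : Submodule K V} :
    (mk K v hv).rep ∈ W ↔ v ∈ W := by
  rw [← Submodule.span_singleton_le_iff_mem, ← submodule_eq, submodule_mk,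
    Submodule.span_singleton_le_iff_mem]

theorem exists_ne_rep_mem_of_one_lt_finrank {W : Submodule K V} (hW : 1 < finrank K W) :
    ∃ p q : ℙ K V, p ≠ q ∧ p.rep ∈ W ∧ q.rep ∈ W := by
  have : Nontrivial W := Module.nontrivial_of_finrank_pos (R := K) (by omega)
  obtain ⟨x, hx⟩ : ∃ x : W, x ≠ 0 := exists_ne 0
  obtain ⟨y, hxy⟩ := exists_linearIndependent_pair_of_one_lt_finrank hW hx
  have hy : y ≠ 0 := hxy.ne_zero 1
  refine ⟨mk K (x : V) (by simpa using hx), mk K (y : V) (by simpa using hy), ?_,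
    (rep_mk_mem_iff _).2 x.2, (rep_mk_mem_iff _).2 y.2⟩
  rw [Ne, mk_eq_mk_iff']
  rintro ⟨a, hax⟩
  exact one_ne_zero (LinearIndependent.pair_iff.1 hxy 1 (-a) (by ext; simp [← hax])).1

theorem exists_dual_ker_eq_of_finrank_add_one [FiniteDimensional K V] {W : Submodule K V}
    (hW : finrank K W + 1 = finrank K V) :
    ∃ φ : Dual K V, φ ≠ 0 ∧ LinearMap.ker φ = W := by
  have hlt : W < ⊤ := by
    refine lt_top_iff_ne_top.2 fun h => ?_
    rw [h, finrank_top] at hW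
    omega
  obtain ⟨φ, hφ, hWφ⟩ := Submodule.exists_dual_map_eq_bot_of_lt_top hlt inferInstance
  refine ⟨φ, hφ, (Submodule.eq_of_le_of_finrank_eq ?_ ?_).symm⟩
  · exact LinearMap.le_ker_iff_map.2 hWφ
  · have := φ.finrank_ker_add_one_of_ne_zero hφ
    omega

theorem not_exists_line_subset_of_forall_secant {B : Set (ℙ K V)}
    (h : ∀ p ∈ B, ∀ q ∈ B, p ≠ q → ∃ r ∉ B, r.rep ∈ Submodule.span K {p.rep, q.rep}) :
    ¬ ∃ W : Submodule K V, finrank K W = 2 ∧ {x : ℙ K V | x.rep ∈ W} ⊆ B := by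
  rintro ⟨W, hW, hWB⟩
  obtain ⟨p, q, hpq, hp, hq⟩ := exists_ne_rep_mem_of_one_lt_finrank (hW ▸ one_lt_two)
  obtain ⟨r, hrB, hr⟩ := h p (hWB hp) q (hWB hq) hpq
  exact hrB (hWB (Submodule.span_le.2 (Set.pair_subset hp hq) hr))

theorem forall_secant_range_mk {ι : Type*} {v : ι → V} (hv : ∀ i, v i ≠ 0)
    (h : ∀ i j, i ≠ j → ∃ t : K, ∀ k (c : K), c • v k ≠ v i + t • v j) :
    ∀ p ∈ Set.range (fun i => mk K (v i) (hv i)), ∀ q ∈ Set.range (fun i => mk K (v i) (hv i)),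
      p ≠ q → ∃ r ∉ Set.range (fun i => mk K (v i) (hv i)),
        r.rep ∈ Submodule.span K {p.rep, q.rep} := by
  rintro _ ⟨i, rfl⟩ _ ⟨j, rfl⟩ hij
  obtain ⟨t, ht⟩ := h i j (by rintro rfl; exact hij rfl)
  have hne : v i + t • v j ≠ 0 := by simpa [eq_comm] using ht i 0
  refine ⟨mk K _ hne, ?_, ?_⟩
  · rintro ⟨k, hk⟩
    obtain ⟨c, hc⟩ := (mk_eq_mk_iff' K _ _ _ _).1 hk.symm
    exact ht k c hc
  · rw [rep_mk_mem_iff]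
    refine add_mem ?_ (Submodule.smul_mem _ _ ?_) <;> rw [← rep_mk_mem_iff (hv _)] <;>
      exact Submodule.subset_span (by simp)

end Projective

section Coordinates

variable {K : Type*} [Field K] {n : ℕ}

theorem exists_dotProduct_eq_zero_iff_of_finrank_eq {W : Submodule K (Fin (n + 1) → K)}
    (hW : finrank K W = n) : ∃ a ≠ 0, ∀ v, v ∈ W ↔ a ⬝ᵥ v = 0 := by
  obtain ⟨φ, hφ, rfl⟩ := exists_dual_ker_eq_of_finrank_add_one (W := W) (by simp [hW])
  refine ⟨(dotProductEquiv K _).symm φ, by simpa using hφ, fun v => ?_⟩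
  rw [LinearMap.mem_ker, ← dotProductEquiv_apply_apply, LinearEquiv.apply_symm_apply]

theorem finrank_ker_dotProductEquiv {a : Fin (n + 1) → K} (ha : a ≠ 0) :
    finrank K (LinearMap.ker (dotProductEquiv K _ a)) = n := by
  have := (dotProductEquiv K _ a).finrank_ker_add_one_of_ne_zero (by simpa using ha)
  simp_all

theorem IsMinimalBlockingSet.of_forall_tangent {B : Set (ℙ K (Fin (n + 1) → K))}
    (hB : IsBlockingSet B)
    (htan : ∀ x ∈ B, ∃ W : Submodule K _, finrank K W = n ∧ ∀ y ∈ B, y.rep ∈ W → y = x) :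
    IsMinimalBlockingSet B := by
  refine ⟨hB, fun B' hB' hB'block => ?_⟩
  obtain ⟨x, hxB, hxB'⟩ := Set.exists_of_ssubset hB'
  obtain ⟨W, hW, hWx⟩ := htan x hxB
  obtain ⟨y, hyB', hyW⟩ := hB'block W hW
  exact hxB' (hWx y (hB'.1 hyB') hyW ▸ hyB')

variable {ι : Type*} {v : ι → Fin (n + 1) → K} (hv : ∀ i, v i ≠ 0)
include hv

theorem isBlockingSet_range_mk (h : ∀ a ≠ 0, ∃ i, a ⬝ᵥ v i = 0) :
    IsBlockingSet (Set.range fun i => mk K (v i) (hv i)) := by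
  intro W hW
  obtain ⟨a, ha, hWa⟩ := exists_dotProduct_eq_zero_iff_of_finrank_eq hW
  obtain ⟨i, hi⟩ := h a ha
  exact ⟨_, Set.mem_range_self i, (rep_mk_mem_iff _).2 ((hWa _).2 hi)⟩

theorem injective_mk_of_forall_tangent (htan : ∀ i, ∃ a, ∀ k, a ⬝ᵥ v k = 0 ↔ k = i) :
    Function.Injective fun i => mk K (v i) (hv i) := by
  intro i k hik
  obtain ⟨c, hc⟩ := (mk_eq_mk_iff' K _ _ _ _).1 hik
  obtain ⟨a, ha⟩ := htan k
  rw [← ha, ← hc, dotProduct_smul, (ha k).2 rfl, smul_zero]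

theorem isMinimalBlockingSet_range_mk (h : ∀ a ≠ 0, ∃ i, a ⬝ᵥ v i = 0)
    (htan : ∀ i, ∃ a ≠ 0, ∀ k, a ⬝ᵥ v k = 0 → k = i) :
    IsMinimalBlockingSet (Set.range fun i => mk K (v i) (hv i)) := by
  refine .of_forall_tangent (isBlockingSet_range_mk hv h) ?_
  rintro _ ⟨i, rfl⟩
  obtain ⟨a, ha, hai⟩ := htan i
  refine ⟨_, finrank_ker_dotProductEquiv ha, ?_⟩
  rintro _ ⟨k, rfl⟩ hk
  rw [rep_mk_mem_iff, LinearMap.mem_ker, dotProductEquiv_apply_apply] at hk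
  rw [hai k hk]

end Coordinates

namespace PG33

def points : Fin 8 → Fin (3 + 1) → ZMod 3 :=
  ![![0,0,0,1], ![0,0,1,0], ![0,0,1,1], ![0,1,0,0], ![0,1,0,1], ![1,0,0,0], ![1,0,0,1], ![1,1,1,0]]

def tangent : Fin 8 → Fin (3 + 1) → ZMod 3 :=
  ![![1,1,2,0], ![1,1,0,1], ![1,1,2,1], ![1,0,1,1], ![1,2,1,1], ![0,1,1,1], ![1,2,2,2], ![1,1,1,1]]

theorem points_ne_zero : ∀ i, points i ≠ 0 := by decide

theorem exists_dotProduct_points_eq_zero : ∀ a ≠ 0, ∃ i, a ⬝ᵥ points i = 0 := by decide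

theorem tangent_ne_zero : ∀ i, tangent i ≠ 0 := by decide

theorem tangent_dotProduct_points_eq_zero_iff : ∀ i k, tangent i ⬝ᵥ points k = 0 ↔ k = i := by
  decide

theorem exists_secant_point_not_mem :
    ∀ i j, i ≠ j → ∃ t : ZMod 3, ∀ k (c : ZMod 3), c • points k ≠ points i + t • points j := by
  decide

end PG33

theorem statement_6 :
    ∃ B : Set (Projectivization (ZMod 3) (Fin (3 + 1) → ZMod 3)),
      B.ncard = 8 ∧ IsMinimalBlockingSet B ∧
      -- nontrivial: `B` contains no line of `PG(3,3)`
      ¬ ∃ W : Submodule (ZMod 3) (Fin (3 + 1) → ZMod 3),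
          Module.finrank (ZMod 3) W = 2 ∧
          {x : Projectivization (ZMod 3) (Fin (3 + 1) → ZMod 3) | x.rep ∈ W} ⊆ B := by
  have htan i : ∃ a, ∀ k, a ⬝ᵥ PG33.points k = 0 ↔ k = i :=
    ⟨PG33.tangent i, PG33.tangent_dotProduct_points_eq_zero_iff i⟩
  refine ⟨Set.range fun i => mk _ (PG33.points i) (PG33.points_ne_zero i), ?_, ?_, ?_⟩
  · rw [Set.ncard_range_of_injective (injective_mk_of_forall_tangent PG33.points_ne_zero htan)]
    simp
  · refine isMinimalBlockingSet_range_mk PG33.points_ne_zero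
      PG33.exists_dotProduct_points_eq_zero fun i => ⟨PG33.tangent i, PG33.tangent_ne_zero i, ?_⟩
    exact fun k => (PG33.tangent_dotProduct_points_eq_zero_iff i k).1
  · exact not_exists_line_subset_of_forall_secant
      (forall_secant_range_mk PG33.points_ne_zero PG33.exists_secant_point_not_mem)
end

section
/- Let p be a prime number, let d ≥ 2 be an integer, and suppose G = (C_p)^d has a 𝔠_n-cover {M_1, …, M_n}. If ⋂_{i ∈ S} M_i is the trivial subgroup for every subset S of {1, …, n} with |S| = d, then for every subset T of {1, …, n} with |T| = d − 1 one has p ≤ |⋂_{i ∈ T} M_i| ≤ n − d + 1. -/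
/-!
Maximal subgroups of the elementary abelian group `G = (C_p)^d` have index `p`, so an
intersection `K` of `d - 1` of them has index at most `p^(d-1)`, i.e. `|K| ≥ p`.
For the upper bound, pick `x` outside all `M_i` with `i ∈ T` (irredundancy). Each `x k` with
`k ∈ K` lies in some `M_j`, necessarily with `j ∉ T`, and `k ↦ j` is injective since
`M_j ∩ K = 1` by hypothesis. Hence `|K| ≤ n - (d - 1)`. If `T` is everything, `K` is the
intersection of the whole cover, which is trivial by core-freeness since `G` is abelian.
-/

/-- `IsCCover n 𝒞` : `𝒞` is a `𝔠ₙ`-cover of `G`, i.e. a set of `n` proper subgroups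
whose union is `G` (a cover), which is irredundant (no proper subset covers `G`),
maximal (all members are maximal subgroups) and core-free (the normal core of the
intersection of the members is trivial). -/
def IsCCover {G : Type*} [Group G] (n : ℕ) (𝒞 : Finset (Subgroup G)) : Prop :=
  𝒞.card = n ∧
  (∀ M ∈ 𝒞, M ≠ ⊤) ∧
  (∀ g : G, ∃ M ∈ 𝒞, g ∈ M) ∧
  (∀ 𝒟 : Finset (Subgroup G), 𝒟 ⊂ 𝒞 → ∃ g : G, ∀ M ∈ 𝒟, g ∉ M) ∧
  (∀ M ∈ 𝒞, IsCoatom M) ∧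
  (𝒞.inf id).normalCore = ⊥

/-- An indexed version: the (pairwise distinct) subgroups `M 1, …, M n` form a `𝔠ₙ`-cover. -/
def IsCCoverFam {G : Type*} [Group G] (n : ℕ) (M : Fin n → Subgroup G) : Prop :=
  Function.Injective M ∧
    IsCCover n (letI := Classical.decEq (Subgroup G); Finset.univ.image M)

theorem QuotientGroup.isSimpleGroup_of_isCoatom {G : Type*} [Group G] {H : Subgroup G}
    [H.Normal] (hH : IsCoatom H) : IsSimpleGroup (G ⧸ H) := by
  let e : Subgroup (G ⧸ H) ≃o Set.Ici H := QuotientGroup.comapMk'OrderIso H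
  have : IsSimpleOrder (Subgroup (G ⧸ H)) :=
    e.isSimpleOrder_iff.mpr (Set.isSimpleOrder_Ici_iff_isCoatom.mpr hH)
  have : Nontrivial (G ⧸ H) := Subgroup.nontrivial_iff.mp inferInstance
  exact ⟨fun N _ => IsSimpleOrder.eq_bot_or_eq_top N⟩

theorem IsPGroup.index_eq_of_isCoatom {G : Type*} [Group G] [Finite G] {p : ℕ} [Fact p.Prime]
    (hG : IsPGroup p G) {H : Subgroup G} (hH : IsCoatom H) : H.index = p := by
  have := hG.isNilpotent
  have : H.Normal := Subgroup.NormalizerCondition.normal_of_coatom H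
    Group.normalizerCondition_of_isNilpotent hH
  have := QuotientGroup.isSimpleGroup_of_isCoatom hH
  have hq : (Nat.card (G ⧸ H)).Prime := IsSimpleGroup.prime_card
  obtain ⟨k, hk⟩ := IsPGroup.iff_card.mp (hG.to_quotient H)
  rw [Subgroup.index_eq_card]
  exact (Nat.prime_dvd_prime_iff_eq hq Fact.out).mp (hq.dvd_of_dvd_pow hk.dvd)

theorem Subgroup.card_le_pow_card_mul_card_biInf {G ι : Type*} [Group G] {M : ι → Subgroup G}
    {m : ℕ} (T : Finset ι) (hM : ∀ i ∈ T, (M i).index ≤ m) :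
    Nat.card G ≤ m ^ T.card * Nat.card ↥(⨅ i ∈ T, M i) := by
  have hindex : (⨅ i ∈ T, M i).index ≤ m ^ T.card :=
    calc (⨅ i ∈ T, M i).index = (⨅ i : T, M i).index := by rw [iInf_subtype']
      _ ≤ ∏ i : T, (M i).index := Subgroup.index_iInf_le _
      _ ≤ ∏ _i : T, m := Finset.prod_le_prod' fun i _ => hM i i.2
      _ = m ^ T.card := by simp
  rw [← Subgroup.card_mul_index (⨅ i ∈ T, M i), mul_comm]
  exact Nat.mul_le_mul_right _ hindex

theorem Subgroup.card_biInf_le_card_compl {G ι : Type*} [Group G] [Fintype ι] [DecidableEq ι]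
    {M : ι → Subgroup G} (hcov : ∀ g, ∃ i, g ∈ M i) {T : Finset ι} {x : G}
    (hx : ∀ i ∈ T, x ∉ M i) (hdisj : ∀ j ∉ T, M j ⊓ ⨅ i ∈ T, M i = ⊥) :
    Nat.card ↥(⨅ i ∈ T, M i) ≤ Tᶜ.card := by
  set K := ⨅ i ∈ T, M i
  have hchoice : ∀ k : K, ∃ j : ↥(Tᶜ : Finset ι), x * k ∈ M j := fun k => by
    obtain ⟨j, hj⟩ := hcov (x * k)
    refine ⟨⟨j, Finset.mem_compl.mpr fun hjT => hx j hjT ?_⟩, hj⟩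
    have hk : (k : G) ∈ M j := (iInf₂_le j hjT : K ≤ M j) k.2
    simpa using (M j).mul_mem hj ((M j).inv_mem hk)
  choose f hf using hchoice
  have hinj : Function.Injective f := fun k k' hkk' => by
    have hmem : (k : G)⁻¹ * k' ∈ M (f k) ⊓ K := by
      refine ⟨?_, K.mul_mem (K.inv_mem k.2) k'.2⟩
      have h' := hf k'
      rw [← hkk'] at h'
      simpa [mul_assoc] using (M (f k)).mul_mem ((M (f k)).inv_mem (hf k)) h'
    rw [hdisj _ (Finset.mem_compl.mp (f k).2), Subgroup.mem_bot, inv_mul_eq_one] at hmem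
    exact Subtype.ext hmem
  simpa only [Nat.card_eq_fintype_card, Fintype.card_coe] using
    Nat.card_le_card_of_injective f hinj

namespace IsCCoverFam

variable {G : Type*} [Group G] {n : ℕ} {M : Fin n → Subgroup G}

theorem isCoatom (hM : IsCCoverFam n M) (i : Fin n) : IsCoatom (M i) := by
  let := Classical.decEq (Subgroup G)
  obtain ⟨-, -, -, -, -, hcoat, -⟩ := hM
  exact hcoat (M i) (Finset.mem_image_of_mem M (Finset.mem_univ i))

theorem exists_mem (hM : IsCCoverFam n M) (g : G) : ∃ i, g ∈ M i := by
  let := Classical.decEq (Subgroup G)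
  obtain ⟨-, -, -, hcov, -, -, -⟩ := hM
  obtain ⟨_, hN, hg⟩ := hcov g
  obtain ⟨i, -, rfl⟩ := Finset.mem_image.mp hN
  exact ⟨i, hg⟩

theorem exists_forall_notMem (hM : IsCCoverFam n M) {T : Finset (Fin n)}
    (hT : T ≠ Finset.univ) : ∃ x, ∀ i ∈ T, x ∉ M i := by
  let := Classical.decEq (Subgroup G)
  obtain ⟨hinj, -, -, -, hirr, -, -⟩ := hM
  obtain ⟨j, hj⟩ : ∃ j, j ∉ T := by simpa [Finset.eq_univ_iff_forall] using hT
  have hsub : T.image M ⊂ Finset.univ.image M := by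
    refine Finset.ssubset_iff_subset_ne.mpr
      ⟨Finset.image_subset_image T.subset_univ, fun h => hj ?_⟩
    obtain ⟨i, hi, hij⟩ := Finset.mem_image.mp (h ▸ Finset.mem_image_of_mem M (Finset.mem_univ j))
    exact hinj hij ▸ hi
  obtain ⟨x, hx⟩ := hirr _ hsub
  exact ⟨x, fun i hi => hx _ (Finset.mem_image_of_mem M hi)⟩

theorem normalCore_iInf_eq_bot (hM : IsCCoverFam n M) : (⨅ i, M i).normalCore = ⊥ := by
  let := Classical.decEq (Subgroup G)
  obtain ⟨-, -, -, -, -, -, hcore⟩ := hM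
  rwa [Finset.inf_image, Function.id_comp, Finset.inf_univ_eq_iInf] at hcore

end IsCCoverFam

theorem statement_17 (p : ℕ) (hp : p.Prime) (d : ℕ) (hd : 2 ≤ d) (n : ℕ)
    (M : Fin n → Subgroup (Fin d → Multiplicative (ZMod p)))
    (hM : IsCCoverFam n M)
    (hbot : ∀ S : Finset (Fin n), S.card = d → (⨅ i ∈ S, M i) = ⊥)
    (T : Finset (Fin n)) (hT : T.card = d - 1) :
    p ≤ Nat.card ↥(⨅ i ∈ T, M i) ∧ Nat.card ↥(⨅ i ∈ T, M i) ≤ n - d + 1 := by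
  classical
  have : Fact p.Prime := ⟨hp⟩
  have hcard : Nat.card (Fin d → Multiplicative (ZMod p)) = p ^ d := by simp
  have hindex i : (M i).index = p := (IsPGroup.of_card hcard).index_eq_of_isCoatom (hM.isCoatom i)
  have hlower : p ≤ Nat.card ↥(⨅ i ∈ T, M i) := by
    have h := Subgroup.card_le_pow_card_mul_card_biInf T fun i _ => (hindex i).le
    obtain ⟨e, rfl⟩ : ∃ e, d = e + 1 := ⟨d - 1, by omega⟩
    rw [hcard, hT, Nat.add_sub_cancel, pow_succ] at h
    exact Nat.le_of_mul_le_mul_left h (pow_pos hp.pos _)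
  refine ⟨hlower, ?_⟩
  by_cases hTu : T = Finset.univ
  · have hK : (⨅ i ∈ T, M i) = ⊥ := by
      simpa [hTu, Subgroup.normalCore_eq_self] using hM.normalCore_iInf_eq_bot
    simp [hK]
  obtain ⟨x, hx⟩ := hM.exists_forall_notMem hTu
  have hdisj : ∀ j ∉ T, M j ⊓ ⨅ i ∈ T, M i = ⊥ := fun j hj => by
    simpa only [Finset.iInf_insert] using
      hbot (insert j T) (by rw [Finset.card_insert_of_notMem hj]; omega)
  calc Nat.card ↥(⨅ i ∈ T, M i) ≤ Tᶜ.card :=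
        Subgroup.card_biInf_le_card_compl hM.exists_mem hx hdisj
    _ = n - (d - 1) := by rw [Finset.card_compl, hT, Fintype.card_fin]
    _ ≤ n - d + 1 := by omega
end
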